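/- arXiv:1506.06998 — 3 statements merged into one kernel-verified Lean document; each statement's English description precedes it below -/
import Mathlib

section
/- Let θ > 0, t > 0, and fix an integer m ≥ 0. If for some integer k ≥ m one has b^{(t,θ)}_{k+1}(m) < b^{(t,θ)}_k(m), where b^{(t,θ)}_k(m) = a^θ_{km} e^{−k(k+θ−1)t/2}, and k ≥ m ≥ 1, then b^{(t,θ)}_{j+1}(m) < b^{(t,θ)}_j(m) for all integers j ≥ k; i.e., the sequence is strictly decreasing from the first decrease onwards. -/
noncomputable def aCoef (θ : ℝ) (k m : ℕ) : ℝ :=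
  (θ + 2 * k - 1) * Real.Gamma (θ + m + k - 1) /
    (Real.Gamma (θ + m) * (Nat.factorial m) * (Nat.factorial (k - m)))

noncomputable def bCoef (θ t : ℝ) (k m : ℕ) : ℝ :=
  aCoef θ k m * Real.exp (-((k : ℝ) * ((k : ℝ) + θ - 1)) * t / 2)

noncomputable def rho (θ t : ℝ) (m j : ℕ) : ℝ :=
  (θ + 2 * j + 1) / (θ + 2 * j - 1) * ((θ + m + j - 1) / ((j : ℝ) + 1 - m)) *
    Real.exp (-(2 * (j : ℝ) + θ) * t / 2)

lemma bpos (θ t : ℝ) (hθ : 0 < θ) (m k : ℕ) (hk : 1 ≤ k) : 0 < bCoef θ t k m := by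
  unfold bCoef aCoef
  have hk' : (1 : ℝ) ≤ k := by exact_mod_cast hk
  have hm' : (0 : ℝ) ≤ m := Nat.cast_nonneg m
  have h1 : (0 : ℝ) < θ + 2 * k - 1 := by nlinarith
  have h2 : 0 < Real.Gamma (θ + m + k - 1) := Real.Gamma_pos_of_pos (by nlinarith)
  have h3 : 0 < Real.Gamma (θ + m) := Real.Gamma_pos_of_pos (by positivity)
  have h4 : (0 : ℝ) < (Nat.factorial m : ℝ) := by exact_mod_cast m.factorial_pos
  have h5 : (0 : ℝ) < (Nat.factorial (k - m) : ℝ) := by exact_mod_cast (k - m).factorial_pos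
  positivity

lemma bratio (θ t : ℝ) (hθ : 0 < θ) (m j : ℕ) (hm : 1 ≤ m) (hmj : m ≤ j) :
    bCoef θ t (j + 1) m = bCoef θ t j m * rho θ t m j := by
  have hm' : (1 : ℝ) ≤ m := by exact_mod_cast hm
  have hmj' : (m : ℝ) ≤ j := by exact_mod_cast hmj
  have hpos : (0 : ℝ) < θ + m + j - 1 := by nlinarith
  have hΓ : Real.Gamma (θ + m + ((j : ℝ) + 1) - 1)
      = (θ + m + j - 1) * Real.Gamma (θ + m + j - 1) := by
    rw [show θ + (m : ℝ) + ((j : ℝ) + 1) - 1 = (θ + m + j - 1) + 1 by ring]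
    exact Real.Gamma_add_one (ne_of_gt hpos)
  have hfac : (Nat.factorial (j + 1 - m) : ℝ) = ((j : ℝ) + 1 - m) * Nat.factorial (j - m) := by
    have h : j + 1 - m = (j - m) + 1 := by omega
    rw [h, Nat.factorial_succ]
    push_cast [Nat.cast_sub hmj]
    ring
  have hexp : Real.exp (-(((j : ℝ) + 1) * (((j : ℝ) + 1) + θ - 1)) * t / 2)
      = Real.exp (-((j : ℝ) * ((j : ℝ) + θ - 1)) * t / 2) *
        Real.exp (-(2 * (j : ℝ) + θ) * t / 2) := by
    rw [← Real.exp_add]; ring_nf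
  have hG : Real.Gamma (θ + m) ≠ 0 := ne_of_gt (Real.Gamma_pos_of_pos (by positivity))
  have hfm : ((Nat.factorial m : ℝ)) ≠ 0 := by positivity
  have hfjm : ((Nat.factorial (j - m) : ℝ)) ≠ 0 := by positivity
  have hd1 : (θ + 2 * (j : ℝ) - 1) ≠ 0 := by nlinarith
  have hd2 : ((j : ℝ) + 1 - m) ≠ 0 := by nlinarith
  unfold bCoef aCoef rho
  push_cast
  rw [hΓ, hfac, hexp]
  field_simp
  ring

lemma rho_mono (θ t : ℝ) (hθ : 0 < θ) (ht : 0 < t) (m j : ℕ) (hm : 1 ≤ m) (hmj : m ≤ j) :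
    rho θ t m (j + 1) ≤ rho θ t m j := by
  have hm' : (1 : ℝ) ≤ m := by exact_mod_cast hm
  have hmj' : (m : ℝ) ≤ j := by exact_mod_cast hmj
  unfold rho
  push_cast
  have hd1 : (0 : ℝ) < θ + 2 * (j : ℝ) - 1 := by nlinarith
  have hd1' : (0 : ℝ) < θ + 2 * ((j : ℝ) + 1) - 1 := by nlinarith
  have hd2 : (0 : ℝ) < (j : ℝ) + 1 - m := by nlinarith
  have hd2' : (0 : ℝ) < ((j : ℝ) + 1) + 1 - m := by nlinarith
  have hA : (θ + 2 * ((j : ℝ) + 1) + 1) / (θ + 2 * ((j : ℝ) + 1) - 1)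
      ≤ (θ + 2 * (j : ℝ) + 1) / (θ + 2 * (j : ℝ) - 1) := by
    rw [div_le_div_iff₀ hd1' hd1]
    nlinarith
  have hB : (θ + m + ((j : ℝ) + 1) - 1) / (((j : ℝ) + 1) + 1 - m)
      ≤ (θ + m + (j : ℝ) - 1) / ((j : ℝ) + 1 - m) := by
    rw [div_le_div_iff₀ hd2' hd2]
    nlinarith
  have hC : Real.exp (-(2 * ((j : ℝ) + 1) + θ) * t / 2)
      ≤ Real.exp (-(2 * (j : ℝ) + θ) * t / 2) := by
    apply Real.exp_le_exp.mpr
    nlinarith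
  have hApos : (0 : ℝ) ≤ (θ + 2 * ((j : ℝ) + 1) + 1) / (θ + 2 * ((j : ℝ) + 1) - 1) := by
    positivity
  have hBpos : (0 : ℝ) ≤ (θ + m + ((j : ℝ) + 1) - 1) / (((j : ℝ) + 1) + 1 - m) := by
    have : (0 : ℝ) < θ + m + ((j : ℝ) + 1) - 1 := by nlinarith
    positivity
  have hAq : (0 : ℝ) ≤ (θ + 2 * (j : ℝ) + 1) / (θ + 2 * (j : ℝ) - 1) := by positivity
  have hBq : (0 : ℝ) ≤ (θ + m + (j : ℝ) - 1) / ((j : ℝ) + 1 - m) := by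
    have : (0 : ℝ) < θ + m + (j : ℝ) - 1 := by nlinarith
    positivity
  have hCpos : (0 : ℝ) ≤ Real.exp (-(2 * ((j : ℝ) + 1) + θ) * t / 2) := (Real.exp_pos _).le
  exact mul_le_mul (mul_le_mul hA hB hBpos hAq) hC hCpos (by positivity)

theorem stmt5 (θ t : ℝ) (hθ : 0 < θ) (ht : 0 < t) (m k : ℕ) (hm : 1 ≤ m) (hmk : m ≤ k)
    (hdec : bCoef θ t (k + 1) m < bCoef θ t k m) :
    ∀ j : ℕ, k ≤ j → bCoef θ t (j + 1) m < bCoef θ t j m := by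
  intro j hj
  induction j, hj using Nat.le_induction with
  | base => exact hdec
  | succ n hn ih =>
    have hmn : m ≤ n := le_trans hmk hn
    have hbn : 0 < bCoef θ t n m := bpos θ t hθ m n (le_trans hm hmn)
    have hbn1 : 0 < bCoef θ t (n + 1) m := bpos θ t hθ m (n + 1) (by omega)
    have hr1 : bCoef θ t (n + 1) m = bCoef θ t n m * rho θ t m n :=
      bratio θ t hθ m n hm hmn
    have hrho : rho θ t m n < 1 := by
      by_contra h
      push_neg at h
      have : bCoef θ t n m ≤ bCoef θ t (n + 1) m := by
        rw [hr1]
        nlinarith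
      linarith
    have hr2 : bCoef θ t (n + 2) m = bCoef θ t (n + 1) m * rho θ t m (n + 1) :=
      bratio θ t hθ m (n + 1) hm (by omega)
    have hmono : rho θ t m (n + 1) ≤ rho θ t m n := rho_mono θ t hθ ht m n hm hmn
    calc bCoef θ t (n + 1 + 1) m = bCoef θ t (n + 1) m * rho θ t m (n + 1) := hr2
      _ < bCoef θ t (n + 1) m := by nlinarith
end

section
/- Let θ > 0, t > 0 and define C^{(t,θ)}_0 = inf{ k ≥ max((1/t − (θ+1)/2), 0) : (θ + 2k + 1)e^{−(2k+θ)t/2} < 1 }. Then for every integer m > C^{(t,θ)}_0 and every integer k ≥ m, b^{(t,θ)}_{k+1}(m) < b^{(t,θ)}_k(m); i.e., the coefficient sequence is decreasing from its very first term. -/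
/-- `C^{(t,θ)}_0 = inf{ k ≥ max(1/t − (θ+1)/2, 0) : (θ+2k+1)e^{−(2k+θ)t/2} < 1 }`. -/
noncomputable def Czero (θ t : ℝ) : ℝ :=
  sInf {k : ℝ | max (1 / t - (θ + 1) / 2) 0 ≤ k ∧
    (θ + 2 * k + 1) * Real.exp (-(2 * k + θ) * t / 2) < 1}

lemma czero_nonneg (θ t : ℝ) : 0 ≤ Czero θ t := by
  apply Real.sInf_nonneg
  intro x hx
  exact le_trans (le_max_right _ _) hx.1

lemma key_ineq (θ t : ℝ) (hθ : 0 < θ) (ht : 0 < t) (m : ℕ) (hm : Czero θ t < m)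
    (k : ℕ) (hk : m ≤ k) :
    (θ + 2 * k + 1) * Real.exp (-(2 * k + θ) * t / 2) < 1 := by
  set S : Set ℝ := {x : ℝ | max (1 / t - (θ + 1) / 2) 0 ≤ x ∧
    (θ + 2 * x + 1) * Real.exp (-(2 * x + θ) * t / 2) < 1} with hS
  have hne : S.Nonempty := by
    set u : ℝ := max (32 / t ^ 2) 2 with hu
    refine ⟨max (max (1 / t - (θ + 1) / 2) 0) ((u - θ) / 2), le_max_left _ _, ?_⟩
    set x := max (max (1 / t - (θ + 1) / 2) 0) ((u - θ) / 2) with hxdef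
    have hx : (u - θ) / 2 ≤ x := le_max_right _ _
    have hv : u ≤ 2 * x + θ := by linarith
    have hu2 : (2 : ℝ) ≤ u := le_max_right _ _
    have hu32 : 32 / t ^ 2 ≤ u := le_max_left _ _
    have hv2 : (2 : ℝ) ≤ 2 * x + θ := le_trans hu2 hv
    have hvpos : 0 < 2 * x + θ := by linarith
    have ht2 : 0 < t ^ 2 := by positivity
    have h32 : 32 ≤ (2 * x + θ) * t ^ 2 := by
      have h1 : 32 / t ^ 2 ≤ 2 * x + θ := le_trans hu32 hv
      calc (32 : ℝ) = 32 / t ^ 2 * t ^ 2 := by field_simp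
        _ ≤ (2 * x + θ) * t ^ 2 := by nlinarith
    set y := (2 * x + θ) * t / 2 with hy
    have hypos : 0 < y := by positivity
    have hexp : y / 2 + 1 < Real.exp (y / 2) :=
      Real.add_one_lt_exp (ne_of_gt (by positivity))
    have hey : Real.exp y = Real.exp (y / 2) * Real.exp (y / 2) := by
      rw [← Real.exp_add]; ring_nf
    have hgt : 2 * x + θ + 1 < Real.exp y := by
      nlinarith [Real.exp_pos (y / 2), hexp, hey, h32, hv2, ht.le]
    have harg : -(2 * x + θ) * t / 2 = -y := by rw [hy]; ring
    rw [harg, Real.exp_neg, ← div_eq_mul_inv, div_lt_one (Real.exp_pos y)]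
    linarith
  have hbdd : BddBelow S := ⟨0, fun x hx => le_trans (le_max_right _ _) hx.1⟩
  have hm' : sInf S < (m : ℝ) := hm
  obtain ⟨s, hsS, hsm⟩ := (csInf_lt_iff hbdd hne).mp hm'
  obtain ⟨hs1, hs2⟩ := hsS
  have hs0 : 0 ≤ s := le_trans (le_max_right _ _) hs1
  have hs1' : 1 / t - (θ + 1) / 2 ≤ s := le_trans (le_max_left _ _) hs1
  have ht2 : 2 ≤ (θ + 2 * s + 1) * t := by
    have h1 : 1 / t ≤ s + (θ + 1) / 2 := by linarith
    have h2 : 1 ≤ (s + (θ + 1) / 2) * t := (div_le_iff₀ ht).mp h1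
    nlinarith
  have hsk : s ≤ (k : ℝ) := by
    have : (m : ℝ) ≤ (k : ℝ) := by exact_mod_cast hk
    linarith
  have hd : 0 ≤ (k : ℝ) - s := by linarith
  have hsplit : Real.exp (-(2 * (k : ℝ) + θ) * t / 2)
      = Real.exp (-(2 * s + θ) * t / 2) * Real.exp (-(((k : ℝ) - s) * t)) := by
    rw [← Real.exp_add]; ring_nf
  have hmain : (θ + 2 * (k : ℝ) + 1) * Real.exp (-(((k : ℝ) - s) * t)) ≤ θ + 2 * s + 1 := by
    have he : ((k : ℝ) - s) * t + 1 ≤ Real.exp (((k : ℝ) - s) * t) :=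
      Real.add_one_le_exp _
    rw [Real.exp_neg, ← div_eq_mul_inv, div_le_iff₀ (Real.exp_pos _)]
    have hpos : 0 < θ + 2 * s + 1 := by linarith
    nlinarith [mul_nonneg hd (by linarith : (0:ℝ) ≤ (θ + 2 * s + 1) * t - 2)]
  calc (θ + 2 * (k : ℝ) + 1) * Real.exp (-(2 * (k : ℝ) + θ) * t / 2)
      = ((θ + 2 * (k : ℝ) + 1) * Real.exp (-(((k : ℝ) - s) * t)))
        * Real.exp (-(2 * s + θ) * t / 2) := by rw [hsplit]; ring
    _ ≤ (θ + 2 * s + 1) * Real.exp (-(2 * s + θ) * t / 2) :=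
        mul_le_mul_of_nonneg_right hmain (Real.exp_nonneg _)
    _ < 1 := hs2

theorem stmt6 (θ t : ℝ) (hθ : 0 < θ) (ht : 0 < t) (m : ℕ) (hm : Czero θ t < m)
    (k : ℕ) (hk : m ≤ k) :
    bCoef θ t (k + 1) m < bCoef θ t k m := by
  have hm0 : 0 < m := by
    have h0 := czero_nonneg θ t
    have h1 : (0 : ℝ) < m := lt_of_le_of_lt h0 hm
    exact_mod_cast h1
  have hk1 : 1 ≤ k := le_trans hm0 hk
  have key := key_ineq θ t hθ ht m hm k hk
  have hkR : (1 : ℝ) ≤ (k : ℝ) := by exact_mod_cast hk1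
  have hmR : (1 : ℝ) ≤ (m : ℝ) := by exact_mod_cast hm0
  have hargpos : 0 < θ + (m : ℝ) + (k : ℝ) - 1 := by linarith
  have hGpos : 0 < Real.Gamma (θ + m) := Real.Gamma_pos_of_pos (by positivity)
  have hGk : 0 < Real.Gamma (θ + m + k - 1) := Real.Gamma_pos_of_pos hargpos
  have hF : (0 : ℝ) < (Nat.factorial m : ℝ) := by exact_mod_cast Nat.factorial_pos m
  have hP : (0 : ℝ) < (Nat.factorial (k - m) : ℝ) := by exact_mod_cast Nat.factorial_pos (k - m)
  have hGadd : Real.Gamma (θ + (m : ℝ) + ((k + 1 : ℕ) : ℝ) - 1)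
      = (θ + (m : ℝ) + (k : ℝ) - 1) * Real.Gamma (θ + (m : ℝ) + (k : ℝ) - 1) := by
    push_cast
    rw [show θ + (m : ℝ) + ((k : ℝ) + 1) - 1 = (θ + (m : ℝ) + (k : ℝ) - 1) + 1 by ring,
      Real.Gamma_add_one (ne_of_gt hargpos)]
  have hfact : ((Nat.factorial (k + 1 - m) : ℕ) : ℝ)
      = (((k - m : ℕ) : ℝ) + 1) * ((Nat.factorial (k - m) : ℕ) : ℝ) := by
    rw [show k + 1 - m = (k - m) + 1 by omega, Nat.factorial_succ]
    push_cast; ring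
  have hexps : Real.exp (-(((k + 1 : ℕ) : ℝ) * (((k + 1 : ℕ) : ℝ) + θ - 1)) * t / 2)
      = Real.exp (-((k : ℝ) * ((k : ℝ) + θ - 1)) * t / 2)
        * Real.exp (-(2 * (k : ℝ) + θ) * t / 2) := by
    rw [← Real.exp_add]; push_cast; ring_nf
  have hck : ((k - m : ℕ) : ℝ) = (k : ℝ) - (m : ℝ) := Nat.cast_sub hk
  have hcnn : (0 : ℝ) ≤ ((k - m : ℕ) : ℝ) := Nat.cast_nonneg _
  have hstar : (θ + 2 * ((k + 1 : ℕ) : ℝ) - 1) * (θ + (m : ℝ) + (k : ℝ) - 1)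
      * Real.exp (-(2 * (k : ℝ) + θ) * t / 2)
      < (θ + 2 * (k : ℝ) - 1) * (((k - m : ℕ) : ℝ) + 1) := by
    push_cast
    have hE := Real.exp_pos (-(2 * (k : ℝ) + θ) * t / 2)
    nlinarith [mul_lt_mul_of_pos_left key hargpos,
      mul_nonneg (by rw [hck]; linarith [hmR, hkR, (by exact_mod_cast hk : (m:ℝ) ≤ k)] : (0:ℝ) ≤ ((k - m : ℕ) : ℝ)) (by linarith : (0:ℝ) ≤ θ + 2 * (k:ℝ) - 1),
      hck]
  unfold bCoef aCoef
  rw [hexps, hGadd, hfact]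
  have hden1 : 0 < Real.Gamma (θ + m) * (Nat.factorial m : ℝ)
      * ((((k - m : ℕ) : ℝ) + 1) * (Nat.factorial (k - m) : ℝ)) := by
    have : (0:ℝ) < ((k - m : ℕ) : ℝ) + 1 := by linarith
    positivity
  have hden2 : 0 < Real.Gamma (θ + m) * (Nat.factorial m : ℝ) * (Nat.factorial (k - m) : ℝ) := by
    positivity
  rw [div_mul_eq_mul_div, div_mul_eq_mul_div, div_lt_div_iff₀ hden1 hden2]
  have hQ : 0 < Real.Gamma (θ + m + k - 1)
      * Real.exp (-((k : ℝ) * ((k : ℝ) + θ - 1)) * t / 2)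
      * (Real.Gamma (θ + m) * (Nat.factorial m : ℝ) * (Nat.factorial (k - m) : ℝ)) := by
    positivity
  have h2 := mul_lt_mul_of_pos_right hstar hQ
  nlinarith [h2]
end

section
/- Let θ > 0, t > 0, m ≥ 0, and c_{k,m} defined as in the antidiagonal construction. If m ≥ C^{(t,θ)}_ε := inf{k ≥ max(1/t − (θ+1)/2, 0) : (θ+2k+1)e^{−(2k+θ)t/2} < 1−ε}, then c_{m+2,m} < (1−ε)·c_{m+1,m}. -/
noncomputable def betaFun (p q : ℝ) : ℝ := Real.Gamma p * Real.Gamma q / Real.Gamma (p + q)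

noncomputable def betaDens (p q z : ℝ) : ℝ := z ^ (p - 1) * (1 - z) ^ (q - 1) / betaFun p q

/-- `E[D_{θ₁+L_m, θ₂+m−L_m}(z)]` where `L_m ~ Binomial(m,x)`. -/
noncomputable def Ebeta (θ₁ θ₂ x z : ℝ) (m : ℕ) : ℝ :=
  ∑ l ∈ Finset.range (m + 1),
    (m.choose l : ℝ) * x ^ l * (1 - x) ^ (m - l) *
      betaDens (θ₁ + l) (θ₂ + ((m - l : ℕ) : ℝ)) z

/-- The coefficient `c_{k,m} = b^{(t,θ)}_k(m)·E[D_{θ₁+L_m, θ₂+m−L_m}(z)]`, θ = θ₁+θ₂. -/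
noncomputable def cCoef (θ₁ θ₂ t x z : ℝ) (k m : ℕ) : ℝ :=
  bCoef (θ₁ + θ₂) t k m * Ebeta θ₁ θ₂ x z m

/-- `C^{(t,θ)}_ε = inf{ k ≥ max(1/t − (θ+1)/2, 0) : (θ+2k+1)e^{−(2k+θ)t/2} < 1−ε }`. -/
noncomputable def Ceps (θ t ε : ℝ) : ℝ :=
  sInf {k : ℝ | max (1 / t - (θ + 1) / 2) 0 ≤ k ∧
    (θ + 2 * k + 1) * Real.exp (-(2 * k + θ) * t / 2) < 1 - ε}


open Filter Real

lemma gmono (θ t : ℝ) (ht : 0 < t) {a b : ℝ} (ha : 1 / t - (θ + 1) / 2 ≤ a) (hab : a ≤ b) :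
    (θ + 2 * b + 1) * Real.exp (-(2 * b + θ) * t / 2) ≤
      (θ + 2 * a + 1) * Real.exp (-(2 * a + θ) * t / 2) := by
  have hA : 1 ≤ (a + (θ + 1) / 2) * t := by
    rw [← div_le_iff₀ ht]
    linarith
  have hs : 0 ≤ (b - a) * t := mul_nonneg (by linarith) ht.le
  have hexp : (b - a) * t + 1 ≤ Real.exp ((b - a) * t) := Real.add_one_le_exp _
  have h1 : θ + 2 * b + 1 ≤ (θ + 2 * a + 1) * Real.exp ((b - a) * t) := by
    have h2 : θ + 2 * b + 1 ≤ (θ + 2 * a + 1) * ((b - a) * t + 1) := by nlinarith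
    have h3 : (θ + 2 * a + 1) * ((b - a) * t + 1) ≤ (θ + 2 * a + 1) * Real.exp ((b - a) * t) := by
      apply mul_le_mul_of_nonneg_left hexp
      nlinarith
    linarith
  have h4 := mul_le_mul_of_nonneg_right h1 (Real.exp_nonneg (-(2 * b + θ) * t / 2))
  calc (θ + 2 * b + 1) * Real.exp (-(2 * b + θ) * t / 2)
      ≤ (θ + 2 * a + 1) * Real.exp ((b - a) * t) * Real.exp (-(2 * b + θ) * t / 2) := h4
    _ = (θ + 2 * a + 1) * Real.exp (-(2 * a + θ) * t / 2) := by
        rw [mul_assoc, ← Real.exp_add]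
        congr 2
        ring

lemma Sne (θ t ε : ℝ) (ht : 0 < t) (hε1 : ε < 1) :
    {k : ℝ | max (1 / t - (θ + 1) / 2) 0 ≤ k ∧
      (θ + 2 * k + 1) * Real.exp (-(2 * k + θ) * t / 2) < 1 - ε}.Nonempty := by
  have h0 : Tendsto (fun y : ℝ => y * Real.exp (-y)) atTop (nhds 0) := by
    simpa using Real.tendsto_pow_mul_exp_neg_atTop_nhds_zero 1
  have hf : Tendsto (fun y : ℝ => 2 / t * (y * Real.exp (-y)) + Real.exp (-y)) atTop (nhds 0) := by
    have := (h0.const_mul (2 / t)).add Real.tendsto_exp_neg_atTop_nhds_zero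
    simpa using this
  have hy : Tendsto (fun k : ℝ => (2 * k + θ) * t / 2) atTop atTop := by
    have h1 : Tendsto (fun k : ℝ => k * t + θ * t / 2) atTop atTop :=
      tendsto_atTop_add_const_right _ _ (tendsto_id.atTop_mul_const ht)
    exact h1.congr (fun k => by ring)
  have h1 : Tendsto (fun k : ℝ => (θ + 2 * k + 1) * Real.exp (-(2 * k + θ) * t / 2)) atTop
      (nhds 0) := by
    have := hf.comp hy
    apply this.congr
    intro k
    simp only [Function.comp]
    have ht' : t ≠ 0 := ne_of_gt ht
    rw [show -(2 * k + θ) * t / 2 = -((2 * k + θ) * t / 2) by ring]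
    field_simp
    ring
  have hev : ∀ᶠ k : ℝ in atTop,
      (θ + 2 * k + 1) * Real.exp (-(2 * k + θ) * t / 2) < 1 - ε :=
    h1.eventually_lt_const (by linarith) 
  obtain ⟨k, hk1, hk2⟩ := (hev.and (eventually_ge_atTop (max (1 / t - (θ + 1) / 2) 0))).exists
  exact ⟨k, hk2, hk1⟩

lemma Ebeta_pos (θ₁ θ₂ x z : ℝ) (hθ₁ : 0 < θ₁) (hθ₂ : 0 < θ₂)
    (hx0 : 0 < x) (hx1 : x < 1) (hz0 : 0 < z) (hz1 : z < 1) (m : ℕ) :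
    0 < Ebeta θ₁ θ₂ x z m := by
  apply Finset.sum_pos
  · intro l hl
    simp only [Finset.mem_range] at hl
    have hchoose : 0 < (m.choose l : ℝ) := by
      exact_mod_cast Nat.choose_pos (Nat.lt_succ_iff.mp hl)
    have hbd : 0 < betaDens (θ₁ + l) (θ₂ + ((m - l : ℕ) : ℝ)) z := by
      have hp : 0 < θ₁ + (l : ℝ) := by positivity
      have hq : 0 < θ₂ + ((m - l : ℕ) : ℝ) := by positivity
      unfold betaDens betaFun
      apply div_pos
      · exact mul_pos (Real.rpow_pos_of_pos hz0 _) (Real.rpow_pos_of_pos (by linarith) _)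
      · exact div_pos (mul_pos (Real.Gamma_pos_of_pos hp) (Real.Gamma_pos_of_pos hq))
          (Real.Gamma_pos_of_pos (by linarith))
    have : 0 < x ^ l := pow_pos hx0 l
    have : 0 < (1 - x) ^ (m - l) := pow_pos (by linarith) _
    positivity
  · exact ⟨0, Finset.mem_range.mpr (Nat.succ_pos m)⟩

theorem stmt16 (θ₁ θ₂ t x z ε : ℝ) (hθ₁ : 0 < θ₁) (hθ₂ : 0 < θ₂) (ht : 0 < t)
    (hx0 : 0 < x) (hx1 : x < 1) (hz0 : 0 < z) (hz1 : z < 1)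
    (hε0 : 0 < ε) (hε1 : ε < 1) (m : ℕ)
    (hm : Ceps (θ₁ + θ₂) t ε ≤ (m : ℝ)) :
    cCoef θ₁ θ₂ t x z (m + 2) m < (1 - ε) * cCoef θ₁ θ₂ t x z (m + 1) m := by
  set θ : ℝ := θ₁ + θ₂ with hθdef
  have hθ : 0 < θ := by positivity
  -- step 1: get k₀ in the defining set with k₀ < m + 1
  have hSne := Sne θ t ε ht hε1
  have hlt : Ceps θ t ε < (m : ℝ) + 1 := lt_of_le_of_lt hm (by linarith)
  obtain ⟨k₀, hk₀S, hk₀lt⟩ := exists_lt_of_csInf_lt hSne hlt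
  obtain ⟨hk₀ge, hk₀g⟩ := hk₀S
  -- step 2: g (m+1) < 1 - ε
  have hthr : 1 / t - (θ + 1) / 2 ≤ k₀ := le_trans (le_max_left _ _) hk₀ge
  have key : (θ + 2 * ((m : ℝ) + 1) + 1) *
      Real.exp (-(2 * ((m : ℝ) + 1) + θ) * t / 2) < 1 - ε :=
    lt_of_le_of_lt (gmono θ t ht hthr hk₀lt.le) hk₀g
  -- abbreviations
  have hΓm : 0 < Real.Gamma (θ + m) := Real.Gamma_pos_of_pos (by positivity)
  have hΓ2m : 0 < Real.Gamma (θ + 2 * m) := Real.Gamma_pos_of_pos (by positivity)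
  have hfac : 0 < (Nat.factorial m : ℝ) := by exact_mod_cast Nat.factorial_pos m
  set C : ℝ := Real.Gamma (θ + 2 * m) / (Real.Gamma (θ + m) * (Nat.factorial m)) *
    Real.exp (-(((m : ℝ) + 1) * (((m : ℝ) + 1) + θ - 1)) * t / 2) with hCdef
  have hC : 0 < C := by positivity
  set D : ℝ := Real.exp (-(2 * ((m : ℝ) + 1) + θ) * t / 2) with hDdef
  have hD : 0 < D := Real.exp_pos _
  -- compute bCoef values
  have hb1 : bCoef θ t (m + 1) m = (θ + 2 * m + 1) * C := by
    unfold bCoef aCoef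
    rw [show m + 1 - m = 1 by omega]
    push_cast
    rw [show θ + (m : ℝ) + ((m : ℝ) + 1) - 1 = θ + 2 * m by ring]
    simp [hCdef]
    field_simp
    ring
  have hb2 : bCoef θ t (m + 2) m = ((θ + 2 * ((m : ℝ) + 1) + 1) * D) * ((θ + 2 * m) / 2) * C := by
    unfold bCoef aCoef
    rw [show m + 2 - m = 2 by omega]
    push_cast
    rw [show θ + (m : ℝ) + ((m : ℝ) + 2) - 1 = (θ + 2 * m) + 1 by ring]
    rw [Real.Gamma_add_one (by positivity)]
    rw [hCdef, hDdef, show Nat.factorial 2 = 2 from rfl]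
    rw [show -(((m : ℝ) + 2) * ((m : ℝ) + 2 + θ - 1)) * t / 2 =
      -(2 * ((m : ℝ) + 1) + θ) * t / 2 + -(((m : ℝ) + 1) * (((m : ℝ) + 1) + θ - 1)) * t / 2 by ring]
    rw [Real.exp_add]
    push_cast
    field_simp
    ring
  -- core numeric inequality
  have hcore : ((θ + 2 * ((m : ℝ) + 1) + 1) * D) * ((θ + 2 * m) / 2) <
      (1 - ε) * (θ + 2 * m + 1) := by
    have h5 := mul_lt_mul_of_pos_right key (show (0:ℝ) < θ + 2 * m + 1 by positivity)
    have h6 : 0 < (θ + 2 * ((m : ℝ) + 1) + 1) * D := by positivity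
    have hm0 : (0:ℝ) ≤ (m : ℝ) := Nat.cast_nonneg m
    have h7 : ((θ + 2 * ((m : ℝ) + 1) + 1) * D) * ((θ + 2 * m) / 2) ≤
        ((θ + 2 * ((m : ℝ) + 1) + 1) * D) * (θ + 2 * m + 1) :=
      mul_le_mul_of_nonneg_left (by linarith) h6.le
    exact lt_of_le_of_lt h7 h5
  have hb : bCoef θ t (m + 2) m < (1 - ε) * bCoef θ t (m + 1) m := by
    rw [hb1, hb2]
    calc ((θ + 2 * ((m : ℝ) + 1) + 1) * D) * ((θ + 2 * m) / 2) * C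
        < ((1 - ε) * (θ + 2 * m + 1)) * C := mul_lt_mul_of_pos_right hcore hC
      _ = (1 - ε) * ((θ + 2 * m + 1) * C) := by ring
  -- conclude
  have hE : 0 < Ebeta θ₁ θ₂ x z m := Ebeta_pos θ₁ θ₂ x z hθ₁ hθ₂ hx0 hx1 hz0 hz1 m
  unfold cCoef
  rw [← hθdef]
  calc bCoef θ t (m + 2) m * Ebeta θ₁ θ₂ x z m
      < ((1 - ε) * bCoef θ t (m + 1) m) * Ebeta θ₁ θ₂ x z m :=
        mul_lt_mul_of_pos_right hb hE
    _ = (1 - ε) * (bCoef θ t (m + 1) m * Ebeta θ₁ θ₂ x z m) := by ring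
end
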